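/- arXiv:2107.06025 — 2 statements merged into one kernel-verified Lean document; each statement's English description precedes it below -/
import Mathlib

section
/- Let 0 < q < 1/2. Then for (Lebesgue-) almost every pair (T,S) ∈ (0,1) × (0,1), the polynomial P_{q,T,S}(x) = (T+S−1)x³ + (1−T−2S+q(S−1−T))x² + (S+q(T−S))x has exactly 2 distinct roots in [0,1]; equivalently, the two-dimensional Lebesgue measure of {(T,S) ∈ (0,1)×(0,1) : P_{q,T,S} has exactly 2 distinct roots in [0,1]} equals 1, and the sets where it has exactly 1 or exactly 3 such roots have measure 0. -/
/-!
Factor `P q T S x = x · f x` with `f x = a x² + b x + c`. For `T, S ∈ (0,1)` we have `f 0 = (1-q) S + q T > 0`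
and `f 1 = -q < 0`, so `f` has a root in `(0,1)`, and only one in `[0,1]`: two roots `r, s` there
would give `f 0 · f 1 = a² r s (1-r)(1-s) ≥ 0`. Hence `P` has exactly the two roots `0` and that one,
for every `(T,S)` in the open square, not just almost every.
-/

open MeasureTheory Set

/-- The cubic whose roots in `[0,1]` are the equilibria of the replicator–mutator
dynamics for the pairwise social dilemma with payoffs `a₁₁ = 1, a₁₂ = S, a₂₁ = T, a₂₂ = 0`. -/
noncomputable def P (q T S x : ℝ) : ℝ :=
  (T + S - 1) * x ^ 3 + (1 - T - 2 * S + q * (S - 1 - T)) * x ^ 2 + (S + q * (T - S)) * x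

/-- Number of distinct roots of `P q T S` in the interval `[0,1]`. -/
noncomputable def nRoots (q T S : ℝ) : ℕ :=
  {x : ℝ | x ∈ Set.Icc (0 : ℝ) 1 ∧ P q T S x = 0}.ncard

lemma quadratic_roots_Icc_eq_singleton {a b c : ℝ} (h0 : 0 < c) (h1 : a + b + c < 0) :
    ∃ r ∈ Ioo (0 : ℝ) 1, {x ∈ Icc (0 : ℝ) 1 | a * x ^ 2 + b * x + c = 0} = {r} := by
  set f : ℝ → ℝ := fun x => a * x ^ 2 + b * x + c
  obtain ⟨r, hr, hfr⟩ := intermediate_value_Ioo' zero_le_one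
    (by fun_prop : ContinuousOn f (Icc 0 1)) (⟨by simpa [f] using h1, by simpa [f] using h0⟩)
  refine ⟨r, hr, eq_singleton_iff_unique_mem.mpr ⟨⟨Ioo_subset_Icc_self hr, hfr⟩, ?_⟩⟩
  rintro s ⟨⟨hs0, hs1⟩, hfs⟩
  by_contra hsr
  have hsum : a * (s + r) + b = 0 := by
    refine (mul_eq_zero.mp ?_).resolve_left (sub_ne_zero.mpr hsr)
    linear_combination hfs - hfr
  have hc : c = a * s * r := by linear_combination hfs - s * hsum
  have habc : a + b + c = a * (1 - s) * (1 - r) := by linear_combination hsum + hc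
  have hneg : (a * s * r) * (a * (1 - s) * (1 - r)) < 0 := by
    rw [← hc, ← habc]; exact mul_neg_of_pos_of_neg h0 h1
  have hnonneg : 0 ≤ (a * s * r) * (a * (1 - s) * (1 - r)) := by
    have := mul_nonneg (mul_nonneg (sq_nonneg a) (mul_nonneg hs0 hr.1.le))
      (mul_nonneg (sub_nonneg.mpr hs1) (sub_nonneg.mpr hr.2.le))
    linarith
  linarith

lemma P_eq_mul (q T S x : ℝ) :
    P q T S x = x * ((T + S - 1) * x ^ 2 + (1 - T - 2 * S + q * (S - 1 - T)) * x
      + (S + q * (T - S))) := by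
  unfold P; ring

lemma nRoots_eq_two {q T S : ℝ} (hq0 : 0 < q) (hq1 : q < 1) (hT : 0 ≤ T) (hS : 0 < S) :
    nRoots q T S = 2 := by
  have hc : 0 < S + q * (T - S) := by nlinarith
  have habc : (T + S - 1) + (1 - T - 2 * S + q * (S - 1 - T)) + (S + q * (T - S)) < 0 := by
    linarith
  obtain ⟨r, hr, hroots⟩ := quadratic_roots_Icc_eq_singleton hc habc
  have hset : {x : ℝ | x ∈ Icc (0 : ℝ) 1 ∧ P q T S x = 0} = {0, r} := by
    rw [insert_eq, ← hroots]
    ext x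
    simp only [P_eq_mul, mul_eq_zero, mem_ofPred_eq, mem_union, mem_singleton_iff]
    constructor
    · rintro ⟨hx, rfl | hfx⟩
      exacts [Or.inl rfl, Or.inr ⟨hx, hfx⟩]
    · rintro (rfl | ⟨hx, hfx⟩)
      exacts [⟨left_mem_Icc.mpr zero_le_one, Or.inl rfl⟩, ⟨hx, Or.inr hfx⟩]
  rw [nRoots, hset, ncard_pair hr.1.ne]

theorem H_two_equilibria (q : ℝ) (hq0 : 0 < q) (hq2 : q < 1 / 2) :
    volume {p : ℝ × ℝ | p.1 ∈ Ioo (0 : ℝ) 1 ∧ p.2 ∈ Ioo (0 : ℝ) 1 ∧ nRoots q p.1 p.2 = 2} = 1 ∧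
    volume {p : ℝ × ℝ | p.1 ∈ Ioo (0 : ℝ) 1 ∧ p.2 ∈ Ioo (0 : ℝ) 1 ∧ nRoots q p.1 p.2 = 1} = 0 ∧
    volume {p : ℝ × ℝ | p.1 ∈ Ioo (0 : ℝ) 1 ∧ p.2 ∈ Ioo (0 : ℝ) 1 ∧ nRoots q p.1 p.2 = 3} = 0 := by
  have hsets : ∀ k : ℕ,
      {p : ℝ × ℝ | p.1 ∈ Ioo (0 : ℝ) 1 ∧ p.2 ∈ Ioo (0 : ℝ) 1 ∧ nRoots q p.1 p.2 = k} =
        if k = 2 then Ioo (0 : ℝ) 1 ×ˢ Ioo (0 : ℝ) 1 else ∅ := by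
    intro k
    ext ⟨T, S⟩
    by_cases hTS : T ∈ Ioo (0 : ℝ) 1 ∧ S ∈ Ioo (0 : ℝ) 1
    · have h2 := nRoots_eq_two hq0 (by linarith) hTS.1.1.le hTS.2.1
      split_ifs with hk <;>
        simp only [mem_ofPred_eq, mem_prod, mem_empty_iff_false, h2, hTS, true_and, hk, eq_comm]
    · split_ifs <;> simp_all
  refine ⟨?_, ?_, ?_⟩ <;> rw [hsets] <;> simp [Measure.volume_eq_prod, Measure.prod_prod]
end

section
/- Let 0 < q < 1/2. Then the two-dimensional Lebesgue measure of the set of pairs (T,S) ∈ (1,2) × (−1,0) for which the polynomial P_{q,T,S}(x) = (T+S−1)x³ + (1−T−2S+q(S−1−T))x² + (S+q(T−S))x has exactly 2 distinct roots in the interval [0,1] equals 3q/(2(1−q)) if 0 < q ≤ 1/3, and equals 3 − 1/(2q(1−q)) if 1/3 ≤ q < 1/2. -/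
/-!
Write `P = x · Q` with `Q x = a x² + b x + c`, where `c = S + q (T - S)` and `Q 1 = a + b + c = -q`.
For two distinct roots of `Q`, `Q 0 · Q 1 = a² r₁ r₂ (1 - r₁) (1 - r₂)`. If `c > 0` then
`Q 0 > 0 > Q 1`, so `Q` has a root in `(0,1)`, and by the identity only one: there are exactly two
equilibria. If `c < 0` the identity makes the roots of `Q` in `[0,1]` come in pairs, so exactly two
equilibria forces a double root, i.e. a vanishing discriminant. The line `c = 0` and the conic
`discrim = 0` are null, so the measure is the area of `{(1 - q) S + q T > 0}` in the rectangle,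
`∫₁² min 1 (q T / (1 - q)) dT`.
-/

open MeasureTheory Set

theorem finite_setOf_quadratic_eq_zero {K : Type*} [Field K] {a b c : K} (ha : a ≠ 0) :
    {x : K | a * (x * x) + b * x + c = 0}.Finite := by
  open Polynomial in
  have hp : C a * X ^ 2 + C b * X + C c ≠ 0 := by
    intro h
    simpa [h] using degree_quadratic (b := b) (c := c) ha
  refine (finite_setOfPred_isRoot hp).subset fun x hx => ?_
  simpa [sq] using hx

theorem measure_prod_null_of_countable_slices {α β : Type*} [MeasurableSpace α]
    [MeasurableSpace β] {μ : Measure α} {ν : Measure β} [SFinite ν] [NullSingletonClass ν]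
    {s : Set (α × β)} (hs : MeasurableSet s) (h : ∀ x, (Prod.mk x ⁻¹' s).Countable) :
    μ.prod ν s = 0 :=
  (Measure.measure_prod_null hs).2 (Filter.Eventually.of_forall fun x => (h x).measure_zero ν)

section Quadratic

variable {a b c : ℝ}

/-- The value `Q 0 * Q 1` of `Q x = a (x - r₁) (x - r₂)`. -/
theorem mul_sum_coeffs_eq_of_roots {r₁ r₂ : ℝ} (hne : r₁ ≠ r₂)
    (h₁ : a * (r₁ * r₁) + b * r₁ + c = 0) (h₂ : a * (r₂ * r₂) + b * r₂ + c = 0) :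
    c * (a + b + c) = a ^ 2 * (r₁ * r₂ * (1 - r₁) * (1 - r₂)) := by
  have hb : b = -(a * (r₁ + r₂)) := by
    have : (r₁ - r₂) * (a * (r₁ + r₂) + b) = 0 := by linear_combination h₁ - h₂
    linarith [(mul_eq_zero.1 this).resolve_left (sub_ne_zero.2 hne)]
  have hc : c = a * r₁ * r₂ := by linear_combination h₁ - r₁ * hb
  rw [hc, hb]
  ring

theorem eq_of_roots_mem_Icc (hneg : c * (a + b + c) < 0) {r₁ r₂ : ℝ}
    (hr₁ : r₁ ∈ Icc (0 : ℝ) 1) (hr₂ : r₂ ∈ Icc (0 : ℝ) 1)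
    (h₁ : a * (r₁ * r₁) + b * r₁ + c = 0) (h₂ : a * (r₂ * r₂) + b * r₂ + c = 0) : r₁ = r₂ := by
  by_contra hne
  have hprod : 0 ≤ r₁ * r₂ * (1 - r₁) * (1 - r₂) :=
    mul_nonneg (mul_nonneg (mul_nonneg hr₁.1 hr₂.1) (by linarith [hr₁.2])) (by linarith [hr₂.2])
  nlinarith [mul_sum_coeffs_eq_of_roots hne h₁ h₂, mul_nonneg (sq_nonneg a) hprod]

theorem discrim_eq_zero_of_unique_root_mem_Icc (hpos : 0 < c * (a + b + c)) {r : ℝ}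
    (hr : r ∈ Icc (0 : ℝ) 1) (hroot : a * (r * r) + b * r + c = 0)
    (huniq : ∀ x ∈ Icc (0 : ℝ) 1, a * (x * x) + b * x + c = 0 → x = r) :
    discrim a b c = 0 := by
  have hr₀ : 0 ≤ r * (1 - r) := mul_nonneg hr.1 (by linarith [hr.2])
  rcases eq_or_ne a 0 with rfl | ha
  · have hc : c = -(b * r) := by linarith
    subst hc
    exfalso
    nlinarith [mul_nonneg (sq_nonneg b) hr₀]
  by_contra hd
  set r' := -b / a - r
  have har' : a * r' = -b - a * r := by simp only [r']; field_simp
  have hroot' : a * (r' * r') + b * r' + c = 0 := by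
    linear_combination (r' - r) * har' + hroot
  have hne : r' ≠ r := by
    intro h
    rw [h] at har'
    rw [discrim_eq_sq_of_quadratic_eq_zero hroot] at hd
    exact hd (by linear_combination (2 * a * r + b) * har')
  have hr' : r' ∈ Icc (0 : ℝ) 1 := by
    have key := mul_sum_coeffs_eq_of_roots hne hroot' hroot
    have : 0 < r' * (1 - r') := by
      by_contra! h
      nlinarith [mul_nonpos_of_nonneg_of_nonpos (mul_nonneg (sq_nonneg a) hr₀) h]
    constructor <;> nlinarith
  exact hne (huniq r' hr' hroot')

end Quadratic

noncomputable def Q (q T S x : ℝ) : ℝ :=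
  (T + S - 1) * (x * x) + (1 - T - 2 * S + q * (S - 1 - T)) * x + (S + q * (T - S))

section Equilibria

variable {q T S : ℝ}

theorem P_eq_mul_Q (q T S x : ℝ) : P q T S x = x * Q q T S x := by
  unfold P Q
  ring

theorem continuous_Q (q T S : ℝ) : Continuous (Q q T S) := by
  unfold Q
  fun_prop

theorem Q_zero : Q q T S 0 = S + q * (T - S) := by
  simp [Q]

theorem Q_one : Q q T S 1 = -q := by
  simp only [Q]
  ring

theorem nRoots_eq_two_iff (hc : S + q * (T - S) ≠ 0) :
    nRoots q T S = 2 ↔ ∃ r, {x | x ∈ Icc (0 : ℝ) 1 ∧ Q q T S x = 0} = {r} := by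
  set s := {x | x ∈ Icc (0 : ℝ) 1 ∧ Q q T S x = 0}
  have hset : {x | x ∈ Icc (0 : ℝ) 1 ∧ P q T S x = 0} = insert 0 s := by
    ext x
    simp only [P_eq_mul_Q, mul_eq_zero, mem_insert_iff, mem_ofPred_eq, s]
    constructor
    · rintro ⟨hx, rfl | hQx⟩
      exacts [Or.inl rfl, Or.inr ⟨hx, hQx⟩]
    · rintro (rfl | ⟨hx, hQx⟩)
      exacts [⟨left_mem_Icc.2 zero_le_one, Or.inl rfl⟩, ⟨hx, Or.inr hQx⟩]
  have h0 : 0 ∉ s := fun h => hc (Q_zero ▸ h.2)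
  rw [nRoots, hset, ← ncard_eq_one]
  rcases s.finite_or_infinite with hfin | hinf
  · rw [ncard_insert_of_notMem h0 hfin]
    omega
  · simp [hinf.ncard, (hinf.mono (subset_insert 0 s)).ncard]

theorem nRoots_eq_two_of_pos (hq : 0 < q) (hc : 0 < S + q * (T - S)) : nRoots q T S = 2 := by
  rw [nRoots_eq_two_iff hc.ne']
  obtain ⟨r, hr, hQr⟩ : ∃ r ∈ Ioo (0 : ℝ) 1, Q q T S r = 0 :=
    intermediate_value_Ioo' zero_le_one (continuous_Q q T S).continuousOn
      ⟨by rw [Q_one]; linarith, by rwa [Q_zero]⟩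
  refine ⟨r, eq_singleton_iff_unique_mem.2 ⟨⟨Ioo_subset_Icc_self hr, hQr⟩, ?_⟩⟩
  rintro x ⟨hx, hQx⟩
  exact eq_of_roots_mem_Icc (by linarith [mul_pos hq hc]) hx (Ioo_subset_Icc_self hr) hQx hQr

theorem discrim_eq_zero_of_nRoots_eq_two (hq : 0 < q) (hc : S + q * (T - S) < 0)
    (h : nRoots q T S = 2) :
    discrim (T + S - 1) (1 - T - 2 * S + q * (S - 1 - T)) (S + q * (T - S)) = 0 := by
  obtain ⟨r, hr⟩ := (nRoots_eq_two_iff hc.ne).1 h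
  have hmem (x : ℝ) : x ∈ Icc (0 : ℝ) 1 ∧ Q q T S x = 0 ↔ x = r := Set.ext_iff.1 hr x
  obtain ⟨hrI, hQr⟩ := (hmem r).2 rfl
  exact discrim_eq_zero_of_unique_root_mem_Icc (by nlinarith) hrI hQr
    fun x hx hQx => (hmem x).1 ⟨hx, hQx⟩

end Equilibria

theorem integral_min_one_mul_of_le {k : ℝ} (hk : 2 * k ≤ 1) :
    ∫ T in (1 : ℝ)..2, min 1 (k * T) = 3 * k / 2 := by
  have heq : EqOn (fun T => min 1 (k * T)) (fun T => k * T) (uIcc 1 2) := by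
    intro T hT
    rw [uIcc_of_le one_le_two] at hT
    have : k * T ≤ 1 := by nlinarith [hT.1, hT.2]
    exact min_eq_right this
  rw [intervalIntegral.integral_congr heq, intervalIntegral.integral_const_mul, integral_id]
  ring

theorem integral_min_one_mul_of_half_le {k : ℝ} (hk₁ : 1 / 2 ≤ k) (hk₂ : k ≤ 1) :
    ∫ T in (1 : ℝ)..2, min 1 (k * T) = 2 - k / 2 - 1 / (2 * k) := by
  have hk : 0 < k := by linarith
  have h1 : 1 ≤ 1 / k := by rw [le_div_iff₀ hk]; linarith
  have h2 : 1 / k ≤ 2 := by rw [div_le_iff₀ hk]; linarith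
  have hcont : Continuous fun T => min 1 (k * T) := by fun_prop
  have hlow : EqOn (fun T => min 1 (k * T)) (fun T => k * T) (uIcc 1 (1 / k)) := by
    intro T hT
    rw [uIcc_of_le h1] at hT
    have : k * T ≤ 1 := by have := hT.2; rw [le_div_iff₀ hk] at this; linarith
    exact min_eq_right this
  have hhigh : EqOn (fun T => min 1 (k * T)) (fun _ => 1) (uIcc (1 / k) 2) := by
    intro T hT
    rw [uIcc_of_le h2] at hT
    have : 1 ≤ k * T := by have := hT.1; rw [div_le_iff₀ hk] at this; linarith
    exact min_eq_left this
  rw [← intervalIntegral.integral_add_adjacent_intervals (hcont.intervalIntegrable 1 (1 / k))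
    (hcont.intervalIntegrable (1 / k) 2), intervalIntegral.integral_congr hlow,
    intervalIntegral.integral_congr hhigh, intervalIntegral.integral_const_mul, integral_id,
    intervalIntegral.integral_const]
  rw [smul_eq_mul]
  field_simp
  ring

section Measure

variable {q : ℝ}

theorem volume_setOf_add_mul_sub_eq_zero (hq : q < 1) :
    volume {p : ℝ × ℝ | p.2 + q * (p.1 - p.2) = 0} = 0 := by
  rw [Measure.volume_eq_prod]
  refine measure_prod_null_of_countable_slices
    (measurableSet_eq_fun (by fun_prop) (by fun_prop)) fun T => ?_
  refine (countable_singleton (-(q * T) / (1 - q))).mono fun S (hS : S + q * (T - S) = 0) => ?_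
  rw [mem_singleton_iff, eq_div_iff (by linarith)]
  linear_combination hS

theorem volume_setOf_discrim_eq_zero (hq : q ≠ 0) :
    volume {p : ℝ × ℝ | discrim (p.1 + p.2 - 1) (1 - p.1 - 2 * p.2 + q * (p.2 - 1 - p.1))
      (p.2 + q * (p.1 - p.2)) = 0} = 0 := by
  rw [Measure.volume_eq_prod]
  refine measure_prod_null_of_countable_slices
    (measurableSet_eq_fun (by unfold discrim; fun_prop) (by fun_prop)) fun T => ?_
  refine (finite_setOf_quadratic_eq_zero (pow_ne_zero 2 hq)
    (b := 2 * (q - 2) * (1 - T - q - q * T) - 4 * (q * T + (T - 1) * (1 - q)))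
    (c := (1 - T - q - q * T) ^ 2 - 4 * (T - 1) * q * T)).countable.mono fun S hS => ?_
  simp only [mem_preimage, mem_ofPred_eq, discrim] at hS ⊢
  linear_combination hS

theorem volume_setOf_add_mul_sub_pos (hq₀ : 0 < q) (hq₁ : q < 1) :
    volume {p : ℝ × ℝ | p.1 ∈ Ioo (1 : ℝ) 2 ∧ p.2 ∈ Ioo (-1 : ℝ) 0 ∧ 0 < p.2 + q * (p.1 - p.2)} =
      ENNReal.ofReal (∫ T in (1 : ℝ)..2, min 1 (q / (1 - q) * T)) := by
  set g : ℝ → ℝ := fun T => min 1 (q / (1 - q) * T)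
  have hg : Continuous g := by fun_prop
  have hregion : {p : ℝ × ℝ | p.1 ∈ Ioo (1 : ℝ) 2 ∧ p.2 ∈ Ioo (-1 : ℝ) 0 ∧
      0 < p.2 + q * (p.1 - p.2)} = regionBetween (-g) (fun _ => 0) (Ioo 1 2) := by
    ext ⟨T, S⟩
    simp only [regionBetween, mem_ofPred_eq, mem_Ioo, Pi.neg_apply, neg_lt, g,
      lt_min_iff, mul_comm _ T, ← mul_div_assoc, lt_div_iff₀ (sub_pos.2 hq₁)]
    constructor
    · rintro ⟨hT, ⟨hS₁, hS₀⟩, hc⟩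
      exact ⟨hT, ⟨by linarith, by linarith⟩, hS₀⟩
    · rintro ⟨hT, ⟨hS₁, hc⟩, hS₀⟩
      exact ⟨hT, ⟨by linarith, hS₀⟩, by linarith⟩
  rw [hregion, Measure.volume_eq_prod, volume_regionBetween_eq_integral
    (hg.neg.integrableOn_Icc.mono_set Ioo_subset_Icc_self)
    (continuous_const.integrableOn_Icc.mono_set Ioo_subset_Icc_self) measurableSet_Ioo
    fun T hT => ?_, intervalIntegral.integral_of_le one_le_two, integral_Ioc_eq_integral_Ioo]
  · simp [g]
  · have : 0 ≤ g T := le_min zero_le_one (by have := hT.1; positivity)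
    simpa using this

theorem volume_setOf_nRoots_eq_two (hq₀ : 0 < q) (hq₁ : q < 1) :
    volume {p : ℝ × ℝ | p.1 ∈ Ioo (1 : ℝ) 2 ∧ p.2 ∈ Ioo (-1 : ℝ) 0 ∧ nRoots q p.1 p.2 = 2} =
      volume {p : ℝ × ℝ | p.1 ∈ Ioo (1 : ℝ) 2 ∧ p.2 ∈ Ioo (-1 : ℝ) 0 ∧
        0 < p.2 + q * (p.1 - p.2)} := by
  refine (measure_eq_measure_of_null_sdiff ?_ (measure_mono_null ?_ (measure_union_null
    (volume_setOf_add_mul_sub_eq_zero hq₁) (volume_setOf_discrim_eq_zero hq₀.ne')))).symm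
  · rintro _ ⟨hT, hS, hc⟩
    exact ⟨hT, hS, nRoots_eq_two_of_pos hq₀ hc⟩
  rintro ⟨T, S⟩ ⟨⟨hT, hS, h2⟩, hpos⟩
  rcases lt_trichotomy (S + q * (T - S)) 0 with hc | hc | hc
  · exact Or.inr (discrim_eq_zero_of_nRoots_eq_two hq₀ hc h2)
  · exact Or.inl hc
  · exact absurd ⟨hT, hS, hc⟩ hpos

end Measure

theorem PD_two_equilibria (q : ℝ) (hq0 : 0 < q) (hq2 : q < 1 / 2) :
    volume {p : ℝ × ℝ | p.1 ∈ Ioo (1 : ℝ) 2 ∧ p.2 ∈ Ioo (-1 : ℝ) 0 ∧ nRoots q p.1 p.2 = 2} =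
      ENNReal.ofReal
        (if q ≤ 1 / 3 then 3 * q / (2 * (1 - q)) else 3 - 1 / (2 * q * (1 - q))) := by
  have hq1 : q < 1 := by linarith
  have hq1' : 1 - q ≠ 0 := by linarith
  rw [volume_setOf_nRoots_eq_two hq0 hq1, volume_setOf_add_mul_sub_pos hq0 hq1]
  split_ifs with h
  · rw [integral_min_one_mul_of_le (by rw [← mul_div_assoc, div_le_one₀ (by linarith)]; linarith)]
    congr 1
    field_simp
  · rw [integral_min_one_mul_of_half_le (by rw [le_div_iff₀ (by linarith)]; linarith)
      (by rw [div_le_one₀ (by linarith)]; linarith)]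
    congr 1
    field_simp
    ring
end
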